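/- Let γ_1, …, γ_m be real numbers and set Γ_m(x) = γ_1 x^{m−1} + γ_2 x^{m−2} + ⋯ + γ_{m−1} x + γ_m. If Γ_m(r) > 0, then there exists a real polynomial p(x), divisible by P(x), and an integer N ≥ m − 1, such that the coefficient of x^{N−i+1} in p equals γ_i for 1 ≤ i ≤ m, the coefficient of x^j in p is ≤ 0 for every j ≤ N − m, and the coefficient of x^j in p is 0 for every j > N. -/

import Mathlib

/-!
Put `Γ = γ₁ X ^ (m - 1) + ⋯ + γ_m` and `p = X ^ n * Γ - (X ^ n * Γ mod P)` with `n ≥ k`. Then `P ∣ p`,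
the top coefficients of `p` are those of `X ^ n * Γ`, and its lower ones are minus those of the
remainder, so it suffices that the remainder `Rₙ` of `X ^ n * Γ` has nonnegative coefficients for
some large `n`.

Since `R_{n+1} = X * Rₙ - uₙ P`, where `uₙ` is the coefficient of `X ^ (k - 1)` in `Rₙ`, every
coefficient of `Rₙ` is a nonnegative combination of `u_{n-1}, …, u_{n-k}`, and
`uₙ = ∑ cᵢ u_{n-i}`. Moreover `Rₙ(r) = rⁿ Γ(r) > 0`, so `bₙ = uₙ / rⁿ` is not uniformly small on
any window of `k + 1` consecutive indices. Now `bₙ = ∑ dᵢ b_{n-i}` with `dᵢ = cᵢ / rⁱ ≥ 0` and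
`∑ dᵢ = 1`, so the minima of `b` over such windows increase. If they stayed `≤ 0`, take an index
beyond which `b` stays above their limit `μ` up to `δ`, and a far index `N` where `b` is below `μ`.
As `bₙ - L ≥ dᵢ (b_{n-i} - L)` for a lower bound `L`, stepping back from `N` by indices `i` with
`cᵢ ≠ 0` keeps `b` close to `μ ≤ 0`; by the gcd condition these steps reach a whole window,
a contradiction. Hence `u` is eventually positive.
-/

open Polynomial Finset Filter

lemma Finset.exists_mem_closure_of_gcd_eq_one {S : Finset ℕ} (hS : S.gcd id = 1) :
    ∃ F, ∀ t ≥ F, t ∈ AddSubmonoid.closure (S : Set ℕ) := by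
  obtain ⟨F, hF⟩ := Nat.exists_mem_closure_of_ge (S : Set ℕ)
  have h : Nat.setGcd S ∣ 1 := hS ▸ Finset.dvd_gcd fun i hi => Nat.setGcd_dvd_of_mem hi
  exact ⟨F, fun t ht => hF t ht (by rw [Nat.dvd_one.1 h]; exact one_dvd t)⟩

namespace Renewal

variable {k n₀ : ℕ} {d b : ℕ → ℝ}

def IsSolution (k : ℕ) (d b : ℕ → ℝ) (n₀ : ℕ) : Prop :=
  ∀ n ≥ n₀, b n = ∑ i ∈ Icc 1 k, d i * b (n - i)

noncomputable def windowMin (k : ℕ) (b : ℕ → ℝ) (n : ℕ) : ℝ :=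
  (Icc (n - k) n).inf' (nonempty_Icc.2 (Nat.sub_le n k)) b

lemma windowMin_le {n j : ℕ} (h₁ : n - k ≤ j) (h₂ : j ≤ n) : windowMin k b n ≤ b j :=
  inf'_le b (mem_Icc.2 ⟨h₁, h₂⟩)

lemma exists_eq_windowMin (n : ℕ) : ∃ j, n - k ≤ j ∧ j ≤ n ∧ b j = windowMin k b n := by
  obtain ⟨j, hj, h⟩ := exists_mem_eq_inf' (nonempty_Icc.2 (Nat.sub_le n k)) b
  exact ⟨j, (mem_Icc.1 hj).1, (mem_Icc.1 hj).2, h.symm⟩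

lemma windowMin_le_succ (hd : ∀ i, 0 ≤ d i) (hd1 : ∑ i ∈ Icc 1 k, d i = 1) {n : ℕ}
    (hrec : b (n + 1) = ∑ i ∈ Icc 1 k, d i * b (n + 1 - i)) :
    windowMin k b n ≤ windowMin k b (n + 1) := by
  refine le_inf' _ _ fun j hj => ?_
  obtain ⟨hj₁, hj₂⟩ := mem_Icc.1 hj
  obtain hj₂ | rfl := hj₂.lt_or_eq
  · exact windowMin_le (by omega) (by omega)
  · calc windowMin k b n = ∑ i ∈ Icc 1 k, d i * windowMin k b n := by
          rw [← sum_mul, hd1, one_mul]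
      _ ≤ b (n + 1) := hrec ▸ sum_le_sum fun i hi =>
          mul_le_mul_of_nonneg_left
            (windowMin_le (by rw [mem_Icc] at hi; omega) (by rw [mem_Icc] at hi; omega)) (hd i)

lemma monotone_windowMin (hd : ∀ i, 0 ≤ d i) (hd1 : ∑ i ∈ Icc 1 k, d i = 1)
    (hb : IsSolution k d b n₀) : Monotone fun t => windowMin k b (n₀ + t) :=
  monotone_nat_of_le_succ fun _ => windowMin_le_succ hd hd1 (hb _ (by omega))

lemma windowMin_le_of_sub_le (hd : ∀ i, 0 ≤ d i) (hd1 : ∑ i ∈ Icc 1 k, d i = 1)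
    (hb : IsSolution k d b n₀) {n j : ℕ} (hn : n₀ ≤ n) (hj : n - k ≤ j) :
    windowMin k b n ≤ b j := by
  rcases le_total j n with hjn | hnj
  · exact windowMin_le hj hjn
  · calc windowMin k b n ≤ windowMin k b j := by
          have := monotone_windowMin hd hd1 hb (Nat.sub_le_sub_right hnj n₀)
          simpa only [Nat.add_sub_cancel' hn, Nat.add_sub_cancel' (hn.trans hnj)] using this
      _ ≤ b j := windowMin_le (Nat.sub_le j k) le_rfl

lemma mul_sub_le_sub (hd : ∀ i, 0 ≤ d i) (hd1 : ∑ i ∈ Icc 1 k, d i = 1)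
    (hb : IsSolution k d b n₀) {L : ℝ} (hL : ∀ j ≥ n₀ - k, L ≤ b j) {i n : ℕ}
    (hi : i ∈ Icc 1 k) (hn : n₀ ≤ n) : d i * (b (n - i) - L) ≤ b n - L := by
  have hsum : b n - L = ∑ j ∈ Icc 1 k, d j * (b (n - j) - L) := by
    simp only [mul_sub, sum_sub_distrib, ← sum_mul, hd1, one_mul, ← hb n hn]
  rw [hsum]
  refine single_le_sum (fun j hj => mul_nonneg (hd j) (sub_nonneg.2 (hL _ ?_))) hi
  rw [mem_Icc] at hj
  omega

lemma sub_le_pow_mul_sub (hd : ∀ i, 0 ≤ d i) (hd1 : ∑ i ∈ Icc 1 k, d i = 1)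
    (hb : IsSolution k d b n₀) {L θ : ℝ} (hL : ∀ j ≥ n₀ - k, L ≤ b j) (hθ : 1 ≤ θ)
    {S : Finset ℕ} (hSk : S ⊆ Icc 1 k) (hθd : ∀ i ∈ S, 1 ≤ θ * d i) {s : ℕ}
    (hs : s ∈ AddSubmonoid.closure (S : Set ℕ)) :
    ∀ n ≥ n₀ + s, b (n - s) - L ≤ θ ^ s * (b n - L) := by
  induction hs using AddSubmonoid.closure_induction with
  | mem i hi =>
    intro n hn
    have hi' := hSk hi
    have hi1 := (mem_Icc.1 hi').1
    calc b (n - i) - L ≤ θ * d i * (b (n - i) - L) :=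
          le_mul_of_one_le_left (sub_nonneg.2 (hL _ (by omega))) (hθd i hi)
      _ = θ * (d i * (b (n - i) - L)) := mul_assoc _ _ _
      _ ≤ θ * (b n - L) := mul_le_mul_of_nonneg_left
          (mul_sub_le_sub hd hd1 hb hL hi' (by omega)) (by linarith)
      _ ≤ θ ^ i * (b n - L) := mul_le_mul_of_nonneg_right
          (le_self_pow₀ hθ (by omega)) (sub_nonneg.2 (hL n (by omega)))
  | zero => intro n _; simp
  | add s t _ _ hs ht =>
    intro n hn
    calc b (n - (s + t)) - L = b (n - s - t) - L := by rw [Nat.sub_add_eq]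
      _ ≤ θ ^ t * (b (n - s) - L) := ht (n - s) (by omega)
      _ ≤ θ ^ t * (θ ^ s * (b n - L)) :=
          mul_le_mul_of_nonneg_left (hs n (by omega)) (pow_nonneg (by linarith) t)
      _ = θ ^ (s + t) * (b n - L) := by ring

lemma exists_window_lt (hd : ∀ i, 0 ≤ d i) (hd1 : ∑ i ∈ Icc 1 k, d i = 1)
    (hb : IsSolution k d b n₀) {S : Finset ℕ} (hSk : S ⊆ Icc 1 k) (hSd : ∀ i ∈ S, 0 < d i)
    (hS : S.gcd id = 1) (hneg : ∀ n ≥ n₀, windowMin k b n ≤ 0) {ε : ℝ} (hε : 0 < ε) :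
    ∃ n ≥ n₀, ∀ j, n - k ≤ j → j ≤ n → b j < ε := by
  obtain ⟨F, hF⟩ := exists_mem_closure_of_gcd_eq_one hS
  obtain ⟨θ, hθ, hθd⟩ : ∃ θ : ℝ, 1 ≤ θ ∧ ∀ i ∈ S, 1 ≤ θ * d i := by
    obtain ⟨M, hM⟩ := (S.image fun i => (d i)⁻¹).exists_le
    refine ⟨max 1 M, le_max_left _ _, fun i hi => ?_⟩
    calc 1 = (d i)⁻¹ * d i := (inv_mul_cancel₀ (hSd i hi).ne').symm
      _ ≤ max 1 M * d i := mul_le_mul_of_nonneg_right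
          ((hM _ (mem_image_of_mem _ hi)).trans (le_max_right _ _)) (hSd i hi).le
  set C := θ ^ (F + k)
  obtain ⟨δ, hδ, hCδ⟩ := exists_pos_mul_lt hε C
  set w := fun t => windowMin k b (n₀ + t)
  have hbdd : BddAbove (Set.range w) := ⟨0, by rintro _ ⟨t, rfl⟩; exact hneg _ (by omega)⟩
  obtain ⟨t₁, ht₁⟩ := exists_lt_of_lt_ciSup (show iSup w - δ < iSup w by linarith)
  set L := windowMin k b (n₀ + t₁)
  have hL : ∀ j ≥ n₀ + t₁ - k, L ≤ b j := fun j hj =>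
    windowMin_le_of_sub_le hd hd1 hb (by omega) hj
  obtain ⟨N, hN₁, hN₂, hbN⟩ := exists_eq_windowMin (k := k) (b := b) (n₀ + (t₁ + F + 2 * k))
  have hNL : b N - L < δ := by
    have := le_ciSup hbdd (t₁ + F + 2 * k)
    simp only [w] at this ht₁
    linarith
  refine ⟨N - F, by omega, fun j hj₁ hj₂ => ?_⟩
  -- `N - j ≥ F` is a sum of elements of `S`, and `b` is within `δ` of its lower bound `L` at `N`
  have hprop := sub_le_pow_mul_sub hd hd1 (fun n hn => hb n (by omega)) hL hθ hSk hθd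
    (hF (N - j) (by omega)) N (by omega)
  rw [Nat.sub_sub_self (by omega)] at hprop
  calc b j ≤ L + θ ^ (N - j) * (b N - L) := by linarith
    _ ≤ 0 + C * δ := add_le_add (hneg _ (by omega)) (mul_le_mul
        (pow_le_pow_right₀ hθ (by omega)) hNL.le (sub_nonneg.2 (hL N (by omega))) (pow_nonneg (by linarith) _))
    _ < ε := by linarith

theorem eventually_pos (hd : ∀ i, 0 ≤ d i) (hd1 : ∑ i ∈ Icc 1 k, d i = 1)
    (hb : IsSolution k d b n₀) {S : Finset ℕ} (hSk : S ⊆ Icc 1 k) (hSd : ∀ i ∈ S, 0 < d i)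
    (hS : S.gcd id = 1) {κ : ℝ} (hκ : 0 < κ)
    (hmax : ∀ n ≥ n₀, ∃ j, n - k ≤ j ∧ j ≤ n ∧ κ ≤ b j) :
    ∀ᶠ n in atTop, 0 < b n := by
  by_cases hpos : ∃ n ≥ n₀, 0 < windowMin k b n
  · obtain ⟨n, hn, h⟩ := hpos
    filter_upwards [eventually_ge_atTop n] with j hj
    exact h.trans_le (windowMin_le_of_sub_le hd hd1 hb hn (by omega))
  · push Not at hpos
    obtain ⟨n, hn, hsmall⟩ := exists_window_lt hd hd1 hb hSk hSd hS hpos hκ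
    obtain ⟨j, hj₁, hj₂, hj⟩ := hmax n hn
    exact absurd hj (hsmall j hj₁ hj₂).not_ge

end Renewal

section ModByMonic

variable {R : Type*} [Ring R] {P G : R[X]}

lemma dvd_sub_modByMonic (f : R[X]) : P ∣ f - f %ₘ P :=
  ⟨f /ₘ P, by rw [modByMonic_eq_sub_mul_div f P, sub_sub_cancel]⟩

lemma coeff_X_pow_mul_sub_modByMonic_add [Nontrivial R] (hP : P.Monic) {n : ℕ}
    (hn : P.natDegree ≤ n) (l : ℕ) :
    (X ^ n * G - (X ^ n * G) %ₘ P).coeff (n + l) = G.coeff l := by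
  have hdeg : ((X ^ n * G) %ₘ P).degree < ↑(l + n) :=
    (degree_modByMonic_lt _ hP).trans_le
      (degree_le_natDegree.trans (by exact_mod_cast hn.trans (Nat.le_add_left n l)))
  rw [coeff_sub, add_comm n l, coeff_X_pow_mul, coeff_eq_zero_of_degree_lt hdeg, sub_zero]

lemma coeff_X_pow_mul_sub_modByMonic_of_lt {n j : ℕ} (hj : j < n) :
    (X ^ n * G - (X ^ n * G) %ₘ P).coeff j = -((X ^ n * G) %ₘ P).coeff j := by
  rw [coeff_sub, coeff_X_pow_mul', if_neg (by omega), zero_sub]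

end ModByMonic

section DescPoly

variable {R : Type*} [Semiring R] {m : ℕ}

-- the polynomial `Γ_m` of the statement is `descPoly m γ`
noncomputable def descPoly (m : ℕ) (a : ℕ → R) : R[X] :=
  ∑ i ∈ Icc 1 m, C (a i) * X ^ (m - i)

lemma coeff_descPoly (a : ℕ → R) (l : ℕ) :
    (descPoly m a).coeff l = if l < m then a (m - l) else 0 := by
  rw [descPoly, finsetSum_coeff]
  split_ifs with hl
  · rw [sum_eq_single (m - l)]
    · rw [coeff_C_mul_X_pow, if_pos (by omega)]
    · intro i hi hne
      rw [coeff_C_mul_X_pow, if_neg (by rw [mem_Icc] at hi; omega)]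
    · exact fun h => absurd (mem_Icc.2 ⟨by omega, by omega⟩) h
  · refine sum_eq_zero fun i hi => ?_
    rw [coeff_C_mul_X_pow, if_neg (by rw [mem_Icc] at hi; omega)]

lemma degree_descPoly_lt (a : ℕ → R) : (descPoly m a).degree < m :=
  (degree_lt_iff_coeff_zero _ _).2 fun l hl => by rw [coeff_descPoly, if_neg (by omega)]

lemma eval_descPoly (a : ℕ → R) (x : R) :
    (descPoly m a).eval x = ∑ i ∈ Icc 1 m, a i * x ^ (m - i) := by
  simp [descPoly, eval_finsetSum]

end DescPoly

section CharPoly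

variable {R : Type*} [Ring R] {k : ℕ}

noncomputable def charPoly (k : ℕ) (c : ℕ → R) : R[X] := X ^ k - descPoly k c

lemma charPoly_monic (c : ℕ → R) : (charPoly k c).Monic :=
  monic_X_pow_sub (degree_descPoly_lt c)

lemma degree_charPoly [Nontrivial R] (c : ℕ → R) : (charPoly k c).degree = k := by
  rw [charPoly, degree_sub_eq_left_of_degree_lt] <;> rw [degree_X_pow]
  exact degree_descPoly_lt c

lemma natDegree_charPoly [Nontrivial R] (c : ℕ → R) : (charPoly k c).natDegree = k :=
  natDegree_eq_of_degree_eq_some (degree_charPoly c)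

lemma coeff_charPoly_self [Nontrivial R] (c : ℕ → R) : (charPoly k c).coeff k = 1 := by
  simpa only [natDegree_charPoly] using (charPoly_monic (k := k) c).coeff_natDegree

lemma coeff_charPoly_of_lt (c : ℕ → R) {j : ℕ} (hj : j < k) :
    (charPoly k c).coeff j = -c (k - j) := by
  rw [charPoly, coeff_sub, coeff_X_pow, coeff_descPoly, if_neg hj.ne, if_pos hj, zero_sub]

lemma sum_div_pow_eq_one {c : ℕ → ℝ} {r : ℝ} (hr : r ≠ 0) (hroot : (charPoly k c).IsRoot r) :
    ∑ i ∈ Icc 1 k, c i / r ^ i = 1 := by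
  have h : ∑ i ∈ Icc 1 k, c i * r ^ (k - i) = r ^ k := by
    have := hroot.eq_zero
    rw [charPoly, eval_sub, eval_pow, eval_X, eval_descPoly, sub_eq_zero] at this
    exact this.symm
  have hterm : ∀ i ∈ Icc 1 k, c i / r ^ i = c i * r ^ (k - i) / r ^ k := fun i hi => by
    rw [show r ^ k = r ^ (k - i) * r ^ i by rw [← pow_add, Nat.sub_add_cancel (mem_Icc.1 hi).2]]
    field_simp
  rw [sum_congr rfl hterm, ← sum_div, h, div_self (pow_ne_zero k hr)]

end CharPoly

section Remainder

variable {k : ℕ} {c : ℕ → ℝ} {G : ℝ[X]}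

noncomputable def rem (k : ℕ) (c : ℕ → ℝ) (G : ℝ[X]) (n : ℕ) : ℝ[X] :=
  (X ^ n * G) %ₘ charPoly k c

noncomputable def remTop (k : ℕ) (c : ℕ → ℝ) (G : ℝ[X]) (n : ℕ) : ℝ :=
  (rem k c G n).coeff (k - 1)

lemma degree_rem_lt (n : ℕ) : (rem k c G n).degree < k :=
  degree_charPoly c ▸ degree_modByMonic_lt _ (charPoly_monic c)

lemma rem_succ (hk : 1 ≤ k) (n : ℕ) :
    rem k c G (n + 1) = X * rem k c G n - C (remTop k c G n) * charPoly k c := by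
  have hdiv : rem k c G n + charPoly k c * ((X ^ n * G) /ₘ charPoly k c) = X ^ n * G :=
    modByMonic_add_div _ _
  rw [rem, modByMonic_eq_of_dvd_sub (charPoly_monic c)
      (p₂ := X * rem k c G n - C (remTop k c G n) * charPoly k c),
    modByMonic_eq_self_iff (charPoly_monic c), degree_charPoly, degree_lt_iff_coeff_zero]
  · intro j hj
    obtain ⟨j, rfl⟩ : ∃ j', j = j' + 1 := ⟨j - 1, by omega⟩
    rw [coeff_sub, coeff_X_mul, coeff_C_mul]
    obtain rfl | hlt := hj.eq_or_lt
    · rw [coeff_charPoly_self, mul_one, remTop, Nat.add_sub_cancel, sub_self]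
    · rw [coeff_eq_zero_of_degree_lt ((degree_rem_lt n).trans_le (by exact_mod_cast (by omega))),
        coeff_eq_zero_of_natDegree_lt (by rw [natDegree_charPoly]; omega), mul_zero, sub_zero]
  · exact ⟨X * ((X ^ n * G) /ₘ charPoly k c) + C (remTop k c G n), by
      linear_combination (-X) * hdiv⟩

lemma coeff_rem_succ_zero (hk : 1 ≤ k) (n : ℕ) :
    (rem k c G (n + 1)).coeff 0 = c k * remTop k c G n := by
  rw [rem_succ hk, coeff_sub, coeff_X_mul_zero, coeff_C_mul, coeff_charPoly_of_lt c hk,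
    Nat.sub_zero]
  ring

lemma coeff_rem_succ_succ {j : ℕ} (hj : j + 1 < k) (n : ℕ) :
    (rem k c G (n + 1)).coeff (j + 1) = (rem k c G n).coeff j + c (k - (j + 1)) * remTop k c G n := by
  rw [rem_succ (by omega), coeff_sub, coeff_X_mul, coeff_C_mul, coeff_charPoly_of_lt c hj]
  ring

lemma coeff_rem {j n : ℕ} (hj : j < k) (hn : j < n) :
    (rem k c G n).coeff j = ∑ t ∈ range (j + 1), c (k - j + t) * remTop k c G (n - 1 - t) := by
  obtain ⟨n, rfl⟩ : ∃ n', n = n' + 1 := ⟨n - 1, by omega⟩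
  induction j generalizing n with
  | zero => simp [coeff_rem_succ_zero (by omega : 1 ≤ k)]
  | succ j ih =>
    obtain ⟨n, rfl⟩ : ∃ n', n = n' + 1 := ⟨n - 1, by omega⟩
    rw [coeff_rem_succ_succ hj, ih (by omega) n (by omega), sum_range_succ' _ (j + 1)]
    congr 1
    refine sum_congr rfl fun t _ => ?_
    rw [show k - (j + 1) + (t + 1) = k - j + t by omega,
      show n + 1 + 1 - 1 - (t + 1) = n + 1 - 1 - t by omega]

lemma remTop_eq (hk : 1 ≤ k) {n : ℕ} (hn : k ≤ n) :
    remTop k c G n = ∑ i ∈ Icc 1 k, c i * remTop k c G (n - i) := by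
  rw [remTop, coeff_rem (by omega) (by omega), ← Ico_add_one_right_eq_Icc,
    sum_Ico_eq_sum_range, Nat.add_sub_cancel, Nat.sub_add_cancel hk]
  refine sum_congr rfl fun t _ => ?_
  rw [show k - (k - 1) + t = 1 + t by omega, Nat.sub_sub]

lemma eval_rem {r : ℝ} (hroot : (charPoly k c).IsRoot r) (n : ℕ) :
    (rem k c G n).eval r = r ^ n * G.eval r := by
  have h := congrArg (eval r) (modByMonic_add_div (X ^ n * G) (charPoly k c))
  rwa [eval_add, eval_mul, hroot.eq_zero, zero_mul, add_zero, eval_mul, eval_pow, eval_X] at h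

lemma coeff_rem_nonneg (hc : ∀ i, 0 ≤ c i) {n₁ n : ℕ}
    (hu : ∀ t ≥ n₁, 0 ≤ remTop k c G t) (hn : n₁ + k ≤ n) (j : ℕ) : 0 ≤ (rem k c G n).coeff j := by
  rcases lt_or_ge j k with hj | hj
  · rw [coeff_rem hj (by omega)]
    exact sum_nonneg fun t ht => mul_nonneg (hc _) (hu _ (by rw [mem_range] at ht; omega))
  · rw [coeff_eq_zero_of_degree_lt ((degree_rem_lt n).trans_le (by exact_mod_cast hj))]

lemma exists_eval_rem_le (hk : 1 ≤ k) (hc : ∀ i, 0 ≤ c i) {r : ℝ} (hr : 0 < r) :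
    ∃ K, 0 ≤ K ∧ ∀ κ n, k ≤ n → (∀ t, n - k ≤ t → t < n → remTop k c G t ≤ κ * r ^ t) →
      (rem k c G n).eval r ≤ κ * r ^ n * K := by
  refine ⟨∑ j ∈ range k, ∑ t ∈ range (j + 1), c (k - j + t) * r ^ j / r ^ (t + 1),
    sum_nonneg fun j _ => sum_nonneg fun t _ => by have := hc (k - j + t); positivity,
    fun κ n hn hu => ?_⟩
  have hdeg : (rem k c G n).natDegree < k := by
    by_cases h0 : rem k c G n = 0
    · rw [h0, natDegree_zero]; omega
    · exact (natDegree_lt_iff_degree_lt h0).2 (degree_rem_lt n)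
  rw [eval_eq_sum_range' hdeg, mul_sum]
  refine sum_le_sum fun j hj => ?_
  rw [mem_range] at hj
  rw [coeff_rem hj (by omega), sum_mul, mul_sum]
  refine sum_le_sum fun t ht => ?_
  rw [mem_range] at ht
  have hnt : r ^ n = r ^ (n - 1 - t) * r ^ (t + 1) := by rw [← pow_add]; congr 1; omega
  calc c (k - j + t) * remTop k c G (n - 1 - t) * r ^ j
      ≤ c (k - j + t) * (κ * r ^ (n - 1 - t)) * r ^ j := by
        gcongr
        · exact hc _
        · exact hu _ (by omega) (by omega)
    _ = κ * r ^ n * (c (k - j + t) * r ^ j / r ^ (t + 1)) := by rw [hnt]; field_simp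

lemma exists_le_remTop_div (hk : 1 ≤ k) (hc : ∀ i, 0 ≤ c i) {r : ℝ} (hr : 0 < r)
    (hroot : (charPoly k c).IsRoot r) (hG : 0 < G.eval r) :
    ∃ κ > 0, ∀ n ≥ k, ∃ j, n - k ≤ j ∧ j ≤ n ∧ κ ≤ remTop k c G j / r ^ j := by
  obtain ⟨K, hK, hle⟩ := exists_eval_rem_le (G := G) hk hc hr
  refine ⟨G.eval r / (K + 1), by positivity, fun n hn => ?_⟩
  by_contra! hsmall
  have h := hle (G.eval r / (K + 1)) (n + 1) (by omega) fun t ht₁ ht₂ =>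
    ((div_lt_iff₀ (pow_pos hr t)).1 (hsmall t (by omega) (by omega))).le
  rw [eval_rem hroot, mul_comm (G.eval r / (K + 1)), mul_assoc] at h
  have h' := le_of_mul_le_mul_left h (pow_pos hr (n + 1))
  rw [div_mul_eq_mul_div, le_div_iff₀ (by linarith)] at h'
  nlinarith

theorem eventually_coeff_rem_nonneg (hk : 1 ≤ k) (hc : ∀ i, 0 ≤ c i) {S : Finset ℕ}
    (hSk : S ⊆ Icc 1 k) (hSc : ∀ i ∈ S, 0 < c i) (hS : S.gcd id = 1) {r : ℝ} (hr : 0 < r)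
    (hroot : (charPoly k c).IsRoot r) (hG : 0 < G.eval r) :
    ∀ᶠ n in atTop, ∀ j, 0 ≤ (rem k c G n).coeff j := by
  have hb : Renewal.IsSolution k (fun i => c i / r ^ i) (fun n => remTop k c G n / r ^ n) k :=
    fun n hn => by
      dsimp only
      rw [remTop_eq hk hn, sum_div]
      refine sum_congr rfl fun i hi => ?_
      rw [show r ^ n = r ^ i * r ^ (n - i) by
        rw [← pow_add, Nat.add_sub_cancel' ((mem_Icc.1 hi).2.trans hn)]]
      field_simp
  obtain ⟨κ, hκ, hmax⟩ := exists_le_remTop_div hk hc hr hroot hG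
  obtain ⟨n₁, hn₁⟩ := eventually_atTop.1 <| Renewal.eventually_pos
    (fun i => div_nonneg (hc i) (pow_nonneg hr.le i)) (sum_div_pow_eq_one hr.ne' hroot) hb hSk
    (fun i hi => div_pos (hSc i hi) (pow_pos hr i)) hS hκ hmax
  exact eventually_atTop.2 ⟨n₁ + k, fun n hn => coeff_rem_nonneg hc
    (fun t ht => ((div_pos_iff_of_pos_right (pow_pos hr t)).1 (hn₁ t ht)).le) hn⟩

end Remainder

theorem zeroing_algorithm_divisibility_general
    (k : ℕ) (hk : 1 ≤ k) (c : ℕ → ℕ)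
    (hgcd : Finset.gcd ((Finset.Icc 1 k).filter fun m => c m ≠ 0) id = 1)
    (P : Polynomial ℝ)
    (hP : P = X ^ k - ∑ i ∈ Finset.Icc 1 k, C (c i : ℝ) * X ^ (k - i))
    (r : ℝ) (hr : 0 < r) (hroot : P.IsRoot r)
    (m : ℕ) (γ : ℕ → ℝ)
    (hΓ : 0 < ∑ i ∈ Finset.Icc 1 m, γ i * r ^ (m - i)) :
    ∃ p : Polynomial ℝ, ∃ N : ℕ, m - 1 ≤ N ∧ P ∣ p ∧
      (∀ i, 1 ≤ i → i ≤ m → p.coeff (N + 1 - i) = γ i) ∧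
      (∀ j, j + m ≤ N → p.coeff j ≤ 0) ∧
      (∀ j, N < j → p.coeff j = 0) := by
  subst hP
  obtain ⟨n, hnonneg, hn⟩ := ((eventually_coeff_rem_nonneg (G := descPoly m γ) hk
    (fun i => Nat.cast_nonneg (c i)) (filter_subset _ _)
    (fun i hi => Nat.cast_pos.2 (Nat.pos_of_ne_zero (mem_filter.1 hi).2)) hgcd hr hroot
    (by rwa [eval_descPoly])).and (eventually_ge_atTop (k + 1))).exists
  have hdeg : (charPoly k fun i => (c i : ℝ)).natDegree ≤ n := by
    rw [natDegree_charPoly]; omega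
  refine ⟨X ^ n * descPoly m γ - rem k _ (descPoly m γ) n, n + m - 1, by omega,
    dvd_sub_modByMonic _, fun i hi₁ hi₂ => ?_, fun j hj => ?_, fun j hj => ?_⟩
  · rw [show n + m - 1 + 1 - i = n + (m - i) by omega, rem,
      coeff_X_pow_mul_sub_modByMonic_add (charPoly_monic _) hdeg, coeff_descPoly,
      if_pos (by omega), Nat.sub_sub_self hi₂]
  · rw [rem, coeff_X_pow_mul_sub_modByMonic_of_lt (by omega), neg_nonpos]
    exact hnonneg j
  · rw [show j = n + (j - n) by omega, rem,
      coeff_X_pow_mul_sub_modByMonic_add (charPoly_monic _) hdeg, coeff_descPoly, if_neg (by omega)]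

/-- If `Γ_m(r) = γ₁ r^(m-1) + ⋯ + γ_m > 0`, then there is a real polynomial `p`,
divisible by `P`, whose leading coefficients (from `x^N` down) are `γ₁, …, γ_m`,
with no positive coefficients thereafter. -/
theorem zeroing_algorithm_divisibility
    (k : ℕ) (hk : 1 ≤ k) (c : ℕ → ℕ) (hck : 0 < c k)
    (hgcd : Finset.gcd ((Finset.Icc 1 k).filter fun m => c m ≠ 0) id = 1)
    (P : Polynomial ℝ)
    (hP : P = X ^ k - ∑ i ∈ Finset.Icc 1 k, C (c i : ℝ) * X ^ (k - i))
    (r : ℝ) (hr : 0 < r) (hroot : P.IsRoot r)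
    (m : ℕ) (hm : 1 ≤ m) (γ : ℕ → ℝ)
    (hΓ : 0 < ∑ i ∈ Finset.Icc 1 m, γ i * r ^ (m - i)) :
    ∃ p : Polynomial ℝ, ∃ N : ℕ, m - 1 ≤ N ∧ P ∣ p ∧
      (∀ i, 1 ≤ i → i ≤ m → p.coeff (N + 1 - i) = γ i) ∧
      (∀ j, j + m ≤ N → p.coeff j ≤ 0) ∧
      (∀ j, N < j → p.coeff j = 0) :=
  zeroing_algorithm_divisibility_general k hk c hgcd P hP r hr hroot m γ hΓ
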